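/- Let n ≥ 2 and let x ∈ K_n belong to the submonoid of K_n generated by {a_2, a_3, …, a_n}. If x·a_1 = f, then x = a_n a_{n-1} ⋯ a_3 a_2. -/

import Mathlib

namespace Kiselman

/-- The defining relations of Kiselman's semigroup on the free monoid over `Fin n`,
where the index `i : Fin n` represents the generator `a_{i+1}` (so letters are 0-based). -/
def Rel (n : ℕ) : FreeMonoid (Fin n) → FreeMonoid (Fin n) → Prop := fun u v =>
  (∃ i : Fin n, u = .of i * .of i ∧ v = .of i) ∨
  (∃ i j : Fin n, j < i ∧
    ((u = .of i * .of j * .of i ∧ v = .of i * .of j) ∨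
     (u = .of j * .of i * .of j ∧ v = .of i * .of j)))

/-- Kiselman's semigroup (monoid) `K n`, presented by the relations `Rel n`. -/
def K (n : ℕ) : Type := (conGen (Rel n)).Quotient

instance (n : ℕ) : Monoid (K n) := inferInstanceAs (Monoid (conGen (Rel n)).Quotient)

/-- The canonical epimorphism `φ` from the free monoid onto `K n`. -/
def phi (n : ℕ) : FreeMonoid (Fin n) →* K n := Con.mk' _

/-- `φ` applied to a word given as a list of (0-based) letters. -/
def phiL (n : ℕ) (w : List (Fin n)) : K n := phi n (FreeMonoid.ofList w)

/-- The generator `a_{i+1}` of `K n` (`i` is the 0-based index). -/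
def gen {n : ℕ} (i : Fin n) : K n := phi n (FreeMonoid.of i)

/-- The word `a_hi a_{hi-1} ⋯ a_lo` (letters named 1-based), as a list of 0-based indices:
`[hi-1, hi-2, …, lo-1]` (capped at `n`). -/
def descList (n lo hi : ℕ) : List (Fin n) :=
  ((List.finRange n).filter (fun k => decide (lo ≤ k.val + 1 ∧ k.val + 1 ≤ hi))).reverse

/-- The zero element `f = a_n a_{n-1} ⋯ a_2 a_1` of `K n`. -/
def fEl (n : ℕ) : K n := phiL n (descList n 1 n)

/-- A word `w` is canonical if for every factorization `w = p ++ [i] ++ u ++ [i] ++ q`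
there are letters `j > i` and `k < i` occurring in `u`. -/
def Canonical {n : ℕ} (w : List (Fin n)) : Prop :=
  ∀ (p u q : List (Fin n)) (i : Fin n),
    w = p ++ [i] ++ u ++ [i] ++ q →
    (∃ j ∈ u, i < j) ∧ (∃ k ∈ u, k < i)

/-- The submonoid of `K n` generated by `{a_2, a_3, …, a_n}`. -/
def upper (n : ℕ) : Submonoid (K n) := Submonoid.closure (gen '' {i : Fin n | i.val ≠ 0})

/-- The submonoid of `K n` generated by `{a_1, a_2, …, a_{n-1}}`. -/
def lower (n : ℕ) : Submonoid (K n) := Submonoid.closure (gen '' {i : Fin n | i.val + 1 ≠ n})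

/-- `m(x) = min { i ∈ {0,…,n} : x ⬝ (a_i a_{i-1} ⋯ a_1) = f }`. -/
noncomputable def mIdx {n : ℕ} (x : K n) : ℕ :=
  sInf {i : ℕ | x * phiL n (descList n 1 i) = fEl n}

/- ### Auxiliary development: the retraction killing `a_1` -/

lemma phi_eq_of_rel {n : ℕ} {u v : FreeMonoid (Fin n)} (h : Rel n u v) :
    phi n u = phi n v :=
  Quotient.sound (ConGen.Rel.of _ _ h)

lemma gen_idem {n : ℕ} (i : Fin n) : gen i * gen i = gen i := by
  have := phi_eq_of_rel (n := n) (u := .of i * .of i) (v := .of i)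
    (Or.inl ⟨i, rfl, rfl⟩)
  simpa [gen, map_mul] using this

lemma gen_rel1 {n : ℕ} {i j : Fin n} (hji : j < i) :
    gen i * gen j * gen i = gen i * gen j := by
  have := phi_eq_of_rel (n := n) (u := .of i * .of j * .of i) (v := .of i * .of j)
    (Or.inr ⟨i, j, hji, Or.inl ⟨rfl, rfl⟩⟩)
  simpa [gen, map_mul] using this

lemma gen_rel2 {n : ℕ} {i j : Fin n} (hji : j < i) :
    gen j * gen i * gen j = gen i * gen j := by
  have := phi_eq_of_rel (n := n) (u := .of j * .of i * .of j) (v := .of i * .of j)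
    (Or.inr ⟨i, j, hji, Or.inr ⟨rfl, rfl⟩⟩)
  simpa [gen, map_mul] using this

/-- Image of a generator under the retraction: kill `a_1`, keep the rest. -/
def piGen (n : ℕ) (i : Fin n) : K n := if i.val = 0 then 1 else gen i

/-- The retraction on the free monoid. -/
def piF (n : ℕ) : FreeMonoid (Fin n) →* K n := FreeMonoid.lift (piGen n)

lemma piF_resp {n : ℕ} (u v : FreeMonoid (Fin n)) (h : Rel n u v) :
    piF n u = piF n v := by
  rcases h with ⟨i, hu, hv⟩ | ⟨i, j, hji, ⟨hu, hv⟩ | ⟨hu, hv⟩⟩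
  · subst hu hv
    simp only [map_mul, piF, FreeMonoid.lift_eval_of, piGen]
    split
    · simp
    · exact gen_idem i
  · subst hu hv
    simp only [map_mul, piF, FreeMonoid.lift_eval_of, piGen]
    have hine : ¬ i.val = 0 := by
      have := hji; omega
    rw [if_neg hine]
    by_cases hj : j.val = 0
    · simp [hj, gen_idem]
    · rw [if_neg hj]
      exact gen_rel1 hji
  · subst hu hv
    simp only [map_mul, piF, FreeMonoid.lift_eval_of, piGen]
    have hine : ¬ i.val = 0 := by
      have := hji; omega
    rw [if_neg hine]
    by_cases hj : j.val = 0
    · simp [hj]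
    · rw [if_neg hj]
      exact gen_rel2 hji

/-- The retraction `π : K n → K n` with `π(a_1) = 1`, `π(a_i) = a_i` for `i ≥ 2`. -/
def piK (n : ℕ) : K n →* K n :=
  Con.lift _ (piF n) (Con.conGen_le.mpr (fun u v h => (Con.ker_rel _).mpr (piF_resp u v h)))

lemma piK_phi {n : ℕ} (u : FreeMonoid (Fin n)) : piK n (phi n u) = piF n u := rfl

lemma piK_gen {n : ℕ} (i : Fin n) : piK n (gen i) = piGen n i := by
  rw [gen, piK_phi, piF, FreeMonoid.lift_eval_of]

lemma piK_fixes_upper {n : ℕ} {x : K n} (hx : x ∈ upper n) : piK n x = x := by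
  induction hx using Submonoid.closure_induction with
  | mem y hy =>
    rcases hy with ⟨i, hi, rfl⟩
    rw [piK_gen, piGen, if_neg hi]
  | one => simp
  | mul a b _ _ ha hb => rw [map_mul, ha, hb]

lemma phiL_cons {n : ℕ} (a : Fin n) (l : List (Fin n)) :
    phiL n (a :: l) = gen a * phiL n l := rfl

lemma piK_phiL {n : ℕ} (w : List (Fin n)) :
    piK n (phiL n w) = phiL n (w.filter (fun k => !decide (k.val = 0))) := by
  induction w with
  | nil => rfl
  | cons a l ih =>
    rw [phiL_cons, map_mul, piK_gen, ih, piGen, List.filter_cons]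
    by_cases ha : a.val = 0
    · simp [ha]
    · rw [if_neg ha, decide_eq_false ha]
      simp only [Bool.not_false, if_true]
      rfl

lemma descList_filter (n : ℕ) :
    (descList n 1 n).filter (fun k => !decide (k.val = 0)) = descList n 2 n := by
  simp only [descList, List.filter_reverse, List.filter_filter]
  congr 1
  apply List.filter_congr
  intro k _
  have hk := k.isLt
  by_cases h0 : k.val = 0
  · simp [h0]
  · simp [h0]
    omega

/-- If `x` lies in the submonoid generated by `a_2, …, a_n` and `x * a_1 = f`,
then `x = a_n a_{n-1} ⋯ a_2`. -/
theorem upper_solution (n : ℕ) (hn : 2 ≤ n) (x : K n) (hx : x ∈ upper n)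
    (h : x * gen ⟨0, by omega⟩ = fEl n) : x = phiL n (descList n 2 n) := by
  have h0 : piK n (gen (⟨0, by omega⟩ : Fin n)) = 1 := by
    rw [piK_gen]; rfl
  have hmap := congrArg (piK n) h
  rw [map_mul, piK_fixes_upper hx, h0, mul_one] at hmap
  rw [hmap, fEl, piK_phiL, descList_filter]
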